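/- arXiv:1808.06583 — 2 statements merged into one kernel-verified Lean document; each statement's English description precedes it below -/
import Mathlib

section
/- For positive integers K, q, r2 with q ≤ K and 1 ≤ r2 ≤ K, we have C(K, r2) - C(K-q, r2) ≥ (q/K) · C(K, r2). -/
lemma aux1 (n k : ℕ) : n.choose (k+1) ≤ n * n.choose k := by
  calc n.choose (k+1) ≤ n.choose (k+1) * (k+1) := Nat.le_mul_of_pos_right _ (Nat.succ_pos k)
    _ = n.choose k * (n - k) := Nat.choose_succ_right_eq n k
    _ ≤ n.choose k * n := Nat.mul_le_mul_left _ (Nat.sub_le n k)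
    _ = n * n.choose k := Nat.mul_comm _ _

lemma aux2 (n k : ℕ) : (n+1) * n.choose (k+1) ≤ n * (n+1).choose (k+1) := by
  have h := aux1 n k
  rw [Nat.choose_succ_succ]
  nlinarith [h]

lemma aux3 (n k d : ℕ) : (n+d) * n.choose (k+1) ≤ n * (n+d).choose (k+1) := by
  induction d with
  | zero => simp [Nat.mul_comm]
  | succ d ih =>
    rcases Nat.eq_zero_or_pos (n+d) with h0 | hpos
    · obtain ⟨hn, hd⟩ := Nat.add_eq_zero.mp h0
      subst hn; subst hd; simp
    · have h2 := aux2 (n+d) k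
      have : (n+d) * ((n+d+1) * n.choose (k+1)) ≤ (n+d) * (n * (n+d+1).choose (k+1)) := by
        calc (n+d) * ((n+d+1) * n.choose (k+1)) = (n+d+1) * ((n+d) * n.choose (k+1)) := by ring
          _ ≤ (n+d+1) * (n * (n+d).choose (k+1)) := Nat.mul_le_mul_left _ ih
          _ = n * ((n+d+1) * (n+d).choose (k+1)) := by ring
          _ ≤ n * ((n+d) * (n+d+1).choose (k+1)) := Nat.mul_le_mul_left _ h2
          _ = (n+d) * (n * (n+d+1).choose (k+1)) := by ring
      have := Nat.le_of_mul_le_mul_left this hpos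
      simpa [Nat.add_assoc] using this

theorem stmt_1 (K q r2 : ℕ) (hK : 0 < K) (hq : 0 < q) (hr2 : 1 ≤ r2)
    (hqK : q ≤ K) (hr2K : r2 ≤ K) :
    (K.choose r2 : ℚ) - ((K - q).choose r2 : ℚ) ≥ ((q : ℚ) / K) * (K.choose r2 : ℚ) := by
  obtain ⟨k, rfl⟩ := Nat.exists_eq_add_of_le hr2
  have key : K * (K - q).choose (1 + k) ≤ (K - q) * K.choose (1 + k) := by
    have h := aux3 (K - q) k q
    rw [Nat.sub_add_cancel hqK] at h
    simpa [Nat.add_comm] using h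
  have keyQ : (K : ℚ) * ((K - q).choose (1 + k) : ℚ) ≤ ((K:ℚ) - q) * (K.choose (1 + k) : ℚ) := by
    have := (Nat.cast_le (α := ℚ)).mpr key
    push_cast [Nat.cast_sub hqK] at this ⊢
    convert this using 2
  have hKQ : (0:ℚ) < K := by exact_mod_cast hK
  rw [ge_iff_le, div_mul_eq_mul_div, div_le_iff₀ hKQ]
  nlinarith [keyQ]
end

section
/- Let K ≥ 1 and μ ∈ [1/K, 1] be real, and let q be an integer with ⌈1/μ⌉ ≤ q ≤ K. Then the pair (r1, r2) = (K/q, ⌊qμ⌋) satisfies: (i) q·r1 = K ∈ [q, K]; (ii) ⌊qμ⌋ ≤ ⌊Kμ⌋; (iii) r1·r2 = (K/q)·⌊qμ⌋ ≤ Kμ; and (iv) C(K, r2) - C(K-q, r2) ≥ (q/K)·C(K, r2). Hence the choice of rates from the prior scheme is always feasible for the conditions of Proposition 1. -/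
/-! Among `K` items, a uniformly random `r`-subset misses a fixed `q`-subset with probability
`C(K - q, r) / C(K, r)`. Since `n ↦ C(n, r) / n` is monotone for `r ≥ 1`, this is at most
`(K - q) / K`, which is inequality (iv); it needs `r = ⌊qμ⌋ ≥ 1`, which is what `q ≥ ⌈1/μ⌉`
guarantees. The remaining conditions are `⌊x⌋ ≤ x` and monotonicity of the floor. -/

theorem Nat.choose_mul_succ_le_choose_succ_mul {r : ℕ} (hr : 1 ≤ r) (n : ℕ) :
    n.choose r * (n + 1) ≤ (n + 1).choose r * n := by
  rw [Nat.choose_mul_succ_eq]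
  exact Nat.mul_le_mul_left _ (by omega)

theorem monotone_choose_div_self {r : ℕ} (hr : 1 ≤ r) :
    Monotone fun n : ℕ ↦ (n.choose r : ℝ) / n := by
  refine monotone_nat_of_le_succ fun n ↦ ?_
  rcases n.eq_zero_or_pos with rfl | hn
  · simp only [CharP.cast_eq_zero, div_zero]
    positivity
  · rw [div_le_div_iff₀ (by positivity) (by positivity)]
    exact_mod_cast Nat.choose_mul_succ_le_choose_succ_mul hr n

theorem choose_eq_mul_choose_div_self {r : ℕ} (hr : 1 ≤ r) (n : ℕ) :
    (n.choose r : ℝ) = n * ((n.choose r : ℝ) / n) := by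
  rcases n.eq_zero_or_pos with rfl | hn
  · simp [Nat.choose_eq_zero_of_lt hr]
  · field_simp

theorem div_mul_choose_le_choose_sub_choose_sub {K q r : ℕ} (hK : 0 < K) (hq : q ≤ K)
    (hr : 1 ≤ r) :
    (q / K : ℝ) * K.choose r ≤ K.choose r - (K - q).choose r := by
  have hmono : ((K - q).choose r : ℝ) / (K - q : ℕ) ≤ (K.choose r : ℝ) / K :=
    monotone_choose_div_self hr (Nat.sub_le K q)
  have hsub : ((K - q).choose r : ℝ) ≤ (K - q : ℕ) * ((K.choose r : ℝ) / K) := by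
    rw [choose_eq_mul_choose_div_self hr (K - q)]
    gcongr
  have hK' : (K : ℝ) ≠ 0 := by positivity
  calc (q / K : ℝ) * K.choose r = K.choose r - (K - q : ℕ) * ((K.choose r : ℝ) / K) := by
        push_cast [hq]
        field_simp
        ring
    _ ≤ K.choose r - (K - q).choose r := by linarith

theorem stmt_12_general (K q : ℕ) (hK : 1 ≤ K) (μ : ℝ) (hμl : 1 / (K : ℝ) ≤ μ)
    (hql : ⌈1 / μ⌉₊ ≤ q) (hqu : q ≤ K) :
    (q : ℝ) * ((K : ℝ) / q) = (K : ℝ) ∧ q ≤ K ∧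
    ⌊(q : ℝ) * μ⌋₊ ≤ ⌊(K : ℝ) * μ⌋₊ ∧
    ((K : ℝ) / q) * (⌊(q : ℝ) * μ⌋₊ : ℝ) ≤ (K : ℝ) * μ ∧
    (K.choose ⌊(q : ℝ) * μ⌋₊ : ℝ) - ((K - q).choose ⌊(q : ℝ) * μ⌋₊ : ℝ)
      ≥ ((q : ℝ) / K) * (K.choose ⌊(q : ℝ) * μ⌋₊ : ℝ) := by
  have hμ : 0 < μ := lt_of_lt_of_le (by positivity) hμl
  have hqμ : 1 ≤ (q : ℝ) * μ := by
    have := (Nat.le_ceil (1 / μ)).trans (Nat.cast_le.mpr hql)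
    rwa [div_le_iff₀ hμ] at this
  have hq : (0 : ℝ) < q := pos_of_mul_pos_left (one_pos.trans_le hqμ) hμ.le
  refine ⟨mul_div_cancel₀ _ hq.ne', hqu, Nat.floor_le_floor (by gcongr), ?_,
    div_mul_choose_le_choose_sub_choose_sub hK hqu (Nat.le_floor (by simpa using hqμ))⟩
  calc (K / q : ℝ) * ⌊(q : ℝ) * μ⌋₊ ≤ K / q * (q * μ) := by
        gcongr
        exact Nat.floor_le (by positivity)
    _ = K * μ := by field_simp

theorem stmt_12 (K q : ℕ) (hK : 1 ≤ K) (μ : ℝ) (hμl : 1 / (K : ℝ) ≤ μ) (hμu : μ ≤ 1)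
    (hql : ⌈1 / μ⌉₊ ≤ q) (hqu : q ≤ K) :
    (q : ℝ) * ((K : ℝ) / q) = (K : ℝ) ∧ q ≤ K ∧
    ⌊(q : ℝ) * μ⌋₊ ≤ ⌊(K : ℝ) * μ⌋₊ ∧
    ((K : ℝ) / q) * (⌊(q : ℝ) * μ⌋₊ : ℝ) ≤ (K : ℝ) * μ ∧
    (K.choose ⌊(q : ℝ) * μ⌋₊ : ℝ) - ((K - q).choose ⌊(q : ℝ) * μ⌋₊ : ℝ)
      ≥ ((q : ℝ) / K) * (K.choose ⌊(q : ℝ) * μ⌋₊ : ℝ) :=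
  stmt_12_general K q hK μ hμl hql hqu
end
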